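/- arXiv:2008.09692 — 3 statements merged into one kernel-verified Lean document; each statement's English description precedes it below -/
import Mathlib

section
/- For all natural numbers m, n with m ≥ 2 and n ≥ 2, the complete bipartite graph K_{m,n} admits a modulo-3-orientation. -/
/-- A finite multigraph: an edge type `E` whose elements have two (not necessarily
distinct) endpoints in `V`, given by `fst` and `snd` (a reference ordering). -/
structure Multigraph (V E : Type) where
  fst : E → V
  snd : E → V

namespace Multigraph

variable {V E : Type}

/-- Under orientation `o`, the tail (source) of edge `e`:
if `o e = true` the edge is oriented `fst e → snd e`, otherwise reversed. -/
def tail (G : Multigraph V E) (o : E → Bool) (e : E) : V :=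
  if o e then G.fst e else G.snd e

/-- Under orientation `o`, the head (target) of edge `e`. -/
def head (G : Multigraph V E) (o : E → Bool) (e : E) : V :=
  if o e then G.snd e else G.fst e

open Classical in
/-- The excess (out-degree minus in-degree) of `v` counting only edges in `A`. -/
noncomputable def excOn (G : Multigraph V E) [Fintype E] (A : Finset E)
    (o : E → Bool) (v : V) : ℤ :=
  ((A.filter fun e => G.tail o e = v).card : ℤ) -
    ((A.filter fun e => G.head o e = v).card : ℤ)

/-- The excess `d⁺(v) - d⁻(v)` of `v` under orientation `o`. -/
noncomputable def exc (G : Multigraph V E) [Fintype E] (o : E → Bool) (v : V) : ℤ :=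
  G.excOn Finset.univ o v

/-- `o` is a modulo-3-orientation: every excess is divisible by 3. -/
def Mod3Orientation (G : Multigraph V E) [Fintype E] (o : E → Bool) : Prop :=
  ∀ v, (3 : ℤ) ∣ G.exc o v

/-- `G` admits a modulo-3-orientation. -/
def Mod3Orientable (G : Multigraph V E) [Fintype E] : Prop :=
  ∃ o, G.Mod3Orientation o

open Classical in
/-- Degree of a vertex (loops counted with multiplicity 2). -/
noncomputable def deg (G : Multigraph V E) [Fintype E] (v : V) : ℕ :=
  (Finset.univ.filter fun e => G.fst e = v).card +
    (Finset.univ.filter fun e => G.snd e = v).card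

open Classical in
/-- `G` has a nowhere-zero 3-flow: an orientation together with nonzero `ZMod 3`
values on the edges satisfying Kirchhoff's law at every vertex. -/
def HasNZ3Flow (G : Multigraph V E) [Fintype E] : Prop :=
  ∃ (o : E → Bool) (f : E → ZMod 3), (∀ e, f e ≠ 0) ∧
    ∀ v, (∑ e ∈ Finset.univ.filter (fun e => G.head o e = v), f e) =
         (∑ e ∈ Finset.univ.filter (fun e => G.tail o e = v), f e)

/-- `u` and `w` are joined by an edge belonging to the set `s`. -/
def Adj (G : Multigraph V E) (s : Set E) (u w : V) : Prop :=
  ∃ e ∈ s, (G.fst e = u ∧ G.snd e = w) ∨ (G.fst e = w ∧ G.snd e = u)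

/-- Number of connected components of the spanning subgraph with edge set `s`. -/
noncomputable def numComponents (G : Multigraph V E) (s : Set E) : ℕ :=
  Nat.card (Quot (G.Adj s))

end Multigraph

/-- The complete bipartite graph `K_{m,n}`. -/
def Kmn (m n : ℕ) : Multigraph (Fin m ⊕ Fin n) (Fin m × Fin n) :=
  ⟨fun p => Sum.inl p.1, fun p => Sum.inr p.2⟩

/-! Put `a = 2n mod 3` and `b = 2m mod 3`, and orient the edge `ij` from left to right exactly when
`i < b ↔ j < a`. A left vertex then has out-degree `a` or `n - a`, so its excess is `±(2a - n)`,
which is `≡ ±3n ≡ 0 (mod 3)`; symmetrically for the right vertices. -/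

open Finset

lemma Finset.card_filter_fst_eq_and {α β : Type*} [Fintype α] [Fintype β] [DecidableEq α]
    (a : α) (p : α × β → Prop) [DecidablePred p] :
    #{x : α × β | x.1 = a ∧ p x} = #{b | p (a, b)} := by
  rw [← card_map (Function.Embedding.sectR a β)]
  congr 1
  ext ⟨a', b⟩
  aesop

lemma Finset.card_filter_snd_eq_and {α β : Type*} [Fintype α] [Fintype β] [DecidableEq β]
    (b : β) (p : α × β → Prop) [DecidablePred p] :
    #{x : α × β | x.2 = b ∧ p x} = #{a | p (a, b)} := by
  rw [← card_map (Function.Embedding.sectL α b)]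
  congr 1
  ext ⟨a, b'⟩
  aesop

lemma Fin.card_filter_iff_val_lt {n a : ℕ} (p : Prop) [Decidable p] (h : a ≤ n) :
    #{j : Fin n | p ↔ (j : ℕ) < a} = if p then a else n - a := by
  by_cases hp : p
  · simp [hp, Fin.card_filter_val_lt, h]
  · have hsplit := card_filter_add_card_filter_not (s := univ) (fun j : Fin n => (j : ℕ) < a)
    simp only [Fin.card_filter_val_lt, card_univ, Fintype.card_fin] at hsplit
    simp only [hp, false_iff, if_false]
    omega

namespace Kmn

variable {m n : ℕ}

lemma tail_eq_inl_iff (o : Fin m × Fin n → Bool) (e : Fin m × Fin n) (i : Fin m) :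
    (Kmn m n).tail o e = .inl i ↔ e.1 = i ∧ o e = true := by
  unfold Multigraph.tail Kmn; cases o e <;> simp

lemma head_eq_inl_iff (o : Fin m × Fin n → Bool) (e : Fin m × Fin n) (i : Fin m) :
    (Kmn m n).head o e = .inl i ↔ e.1 = i ∧ o e = false := by
  unfold Multigraph.head Kmn; cases o e <;> simp

lemma tail_eq_inr_iff (o : Fin m × Fin n → Bool) (e : Fin m × Fin n) (j : Fin n) :
    (Kmn m n).tail o e = .inr j ↔ e.2 = j ∧ o e = false := by
  unfold Multigraph.tail Kmn; cases o e <;> simp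

lemma head_eq_inr_iff (o : Fin m × Fin n → Bool) (e : Fin m × Fin n) (j : Fin n) :
    (Kmn m n).head o e = .inr j ↔ e.2 = j ∧ o e = true := by
  unfold Multigraph.head Kmn; cases o e <;> simp

lemma exc_inl (o : Fin m × Fin n → Bool) (i : Fin m) :
    (Kmn m n).exc o (.inl i) = 2 * #{j | o (i, j) = true} - n := by
  have hsplit : #{j | o (i, j) = true} + #{j | o (i, j) = false} = n := by
    simpa using card_filter_add_card_filter_not (s := univ) (fun j => o (i, j) = true)
  classical
  simp only [Multigraph.exc, Multigraph.excOn, tail_eq_inl_iff, head_eq_inl_iff,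
    card_filter_fst_eq_and]
  omega

lemma exc_inr (o : Fin m × Fin n → Bool) (j : Fin n) :
    (Kmn m n).exc o (.inr j) = m - 2 * #{i | o (i, j) = true} := by
  have hsplit : #{i | o (i, j) = true} + #{i | o (i, j) = false} = m := by
    simpa using card_filter_add_card_filter_not (s := univ) (fun i => o (i, j) = true)
  classical
  simp only [Multigraph.exc, Multigraph.excOn, tail_eq_inr_iff, head_eq_inr_iff,
    card_filter_snd_eq_and]
  omega

def thresholdOrientation (a b : ℕ) : Fin m × Fin n → Bool :=
  fun e => decide ((e.1 : ℕ) < b ↔ (e.2 : ℕ) < a)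

lemma thresholdOrientation_mod3 {a b : ℕ} (ha : a ≤ n) (hb : b ≤ m) (ha3 : a % 3 = 2 * n % 3)
    (hb3 : b % 3 = 2 * m % 3) : (Kmn m n).Mod3Orientation (thresholdOrientation a b) := by
  rintro (i | j)
  · have hcard := Fin.card_filter_iff_val_lt ((i : ℕ) < b) ha
    simp only [exc_inl, thresholdOrientation, decide_eq_true_eq, hcard]
    split_ifs <;> omega
  · have hcard : #{i : Fin m | (i : ℕ) < b ↔ (j : ℕ) < a} = if (j : ℕ) < a then b else m - b := by
      simpa only [iff_comm] using Fin.card_filter_iff_val_lt ((j : ℕ) < a) hb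
    simp only [exc_inr, thresholdOrientation, decide_eq_true_eq, hcard]
    split_ifs <;> omega

end Kmn

/-- For `m, n ≥ 2`, `K_{m,n}` admits a modulo-3-orientation. -/
theorem stmt_2 (m n : ℕ) (hm : 2 ≤ m) (hn : 2 ≤ n) : (Kmn m n).Mod3Orientable :=
  ⟨_, Kmn.thresholdOrientation_mod3 (a := 2 * n % 3) (b := 2 * m % 3) (by omega) (by omega)
    (by omega) (by omega)⟩
end

section
/- Every simple bipartite cubic graph admits a modulo-3-orientation, and hence a nowhere-zero 3-flow. -/
/-- Every simple bipartite cubic graph admits a modulo-3-orientation,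
and hence a nowhere-zero 3-flow. -/
theorem stmt_4 {V E : Type} [Fintype E] (G : Multigraph V E)
    (hsimple₁ : ∀ e, G.fst e ≠ G.snd e)
    (hsimple₂ : ∀ e e', ((G.fst e = G.fst e' ∧ G.snd e = G.snd e') ∨
        (G.fst e = G.snd e' ∧ G.snd e = G.fst e')) → e = e')
    (hbip : ∃ c : V → Bool, ∀ e, c (G.fst e) ≠ c (G.snd e))
    (hcubic : ∀ v, G.deg v = 3) :
    G.Mod3Orientable ∧ G.HasNZ3Flow := by
  classical
  obtain ⟨c, hc⟩ := hbip
  set o : E → Bool := fun e => !(c (G.fst e)) with ho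
  have hopp : ∀ e, c (G.snd e) = !(c (G.fst e)) := by
    intro e
    have := hc e
    cases h : c (G.fst e) <;> cases h2 : c (G.snd e) <;> simp_all
  have htail : ∀ e, c (G.tail o e) = false := by
    intro e
    simp only [Multigraph.tail, ho]
    cases h : c (G.fst e) <;> simp [h, hopp e]
  have hhead : ∀ e, c (G.head o e) = true := by
    intro e
    simp only [Multigraph.head, ho]
    cases h : c (G.fst e) <;> simp [h, hopp e]
  have hdisj : ∀ v : V, Disjoint (Finset.univ.filter fun e => G.fst e = v)
      (Finset.univ.filter fun e => G.snd e = v) := by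
    intro v
    rw [Finset.disjoint_left]
    intro e h1 h2
    simp only [Finset.mem_filter] at h1 h2
    exact hsimple₁ e (h1.2.trans h2.2.symm)
  have hdeg : ∀ v, (Finset.univ.filter fun e => G.fst e = v).card +
      (Finset.univ.filter fun e => G.snd e = v).card = 3 := by
    intro v
    have := hcubic v
    unfold Multigraph.deg at this
    convert this using 2
  have hT : ∀ v, c v = false →
      (Finset.univ.filter fun e => G.tail o e = v) =
      (Finset.univ.filter fun e => G.fst e = v) ∪
        (Finset.univ.filter fun e => G.snd e = v) := by
    intro v hv
    ext e
    simp only [Finset.mem_filter, Finset.mem_union, Finset.mem_univ, true_and]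
    constructor
    · intro h
      simp only [Multigraph.tail] at h
      split at h
      · exact Or.inl h
      · exact Or.inr h
    · rintro (h | h)
      · have hcf : c (G.fst e) = false := by rw [h]; exact hv
        have hoe : o e = true := by simp [ho, hcf]
        simp [Multigraph.tail, hoe, h]
      · have h2 := hopp e
        rw [h, hv] at h2
        have hf : c (G.fst e) = true := by simpa using h2.symm
        have hoe : o e = false := by simp [ho, hf]
        simp [Multigraph.tail, hoe, h]
  have hH0 : ∀ v, c v = false →
      (Finset.univ.filter fun e => G.head o e = v) = ∅ := by
    intro v hv
    rw [Finset.filter_eq_empty_iff]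
    intro e _ h
    have := hhead e
    rw [h, hv] at this
    exact Bool.false_ne_true this
  have hH : ∀ v, c v = true →
      (Finset.univ.filter fun e => G.head o e = v) =
      (Finset.univ.filter fun e => G.fst e = v) ∪
        (Finset.univ.filter fun e => G.snd e = v) := by
    intro v hv
    ext e
    simp only [Finset.mem_filter, Finset.mem_union, Finset.mem_univ, true_and]
    constructor
    · intro h
      simp only [Multigraph.head] at h
      split at h
      · exact Or.inr h
      · exact Or.inl h
    · rintro (h | h)
      · have hf : c (G.fst e) = true := by rw [h]; exact hv
        have hoe : o e = false := by simp [ho, hf]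
        simp [Multigraph.head, hoe, h]
      · have h2 := hopp e
        rw [h, hv] at h2
        have hf : c (G.fst e) = false := by simpa using h2.symm
        have hoe : o e = true := by simp [ho, hf]
        simp [Multigraph.head, hoe, h]
  have hT0 : ∀ v, c v = true →
      (Finset.univ.filter fun e => G.tail o e = v) = ∅ := by
    intro v hv
    rw [Finset.filter_eq_empty_iff]
    intro e _ h
    have := htail e
    rw [h, hv] at this
    simp at this
  have hmod : G.Mod3Orientation o := by
    intro v
    unfold Multigraph.exc Multigraph.excOn
    cases hv : c v
    · rw [hT v hv, hH0 v hv, Finset.card_union_of_disjoint (hdisj v), hdeg v]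
      simp
    · rw [hT0 v hv, hH v hv, Finset.card_union_of_disjoint (hdisj v), hdeg v]
      simp
  refine ⟨⟨o, hmod⟩, o, fun _ => 1, fun _ => one_ne_zero, ?_⟩
  intro v
  simp only [Finset.sum_const, nsmul_eq_mul, mul_one]
  cases hv : c v
  · rw [hT v hv, hH0 v hv, Finset.card_union_of_disjoint (hdisj v), hdeg v]
    simp only [Finset.card_empty, Nat.cast_zero, Nat.cast_ofNat]
    decide
  · rw [hT0 v hv, hH v hv, Finset.card_union_of_disjoint (hdisj v), hdeg v]
    simp only [Finset.card_empty, Nat.cast_zero, Nat.cast_ofNat]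
    decide
end

section
/- Let G be a graph, let v be a vertex of degree exactly 2 with incident edges f1 and f2 (neither a loop), and let G' = G/f1 be the graph obtained by contracting f1. If G' admits a modulo-3-orientation, then G admits a modulo-3-orientation. -/
open Classical in
/-- Signed contribution of edge `e` to the excess of `w`. -/
noncomputable def Multigraph.chi {V E : Type} (G : Multigraph V E) (o : E → Bool)
    (w : V) (e : E) : ℤ :=
  (if G.tail o e = w then 1 else 0) - (if G.head o e = w then 1 else 0)

open Classical in
lemma Multigraph.exc_eq_sum {V E : Type} (G : Multigraph V E) [Fintype E]
    (o : E → Bool) (w : V) : G.exc o w = ∑ e, G.chi o w e := by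
  unfold Multigraph.exc Multigraph.excOn Multigraph.chi
  rw [Finset.sum_sub_distrib]
  push_cast [Finset.card_filter]
  simp

/-- If `v` has degree exactly 2, with non-loop incident edges `f₁ ≠ f₂`, where `f₁`
joins `v` to `u`, and the contraction `G/f₁` (realized by redirecting `v` to `u` and
removing `f₁`) admits a modulo-3-orientation, then so does `G`. -/
theorem stmt_7 {V E : Type} [Fintype E] [DecidableEq V] [DecidableEq E]
    (G : Multigraph V E) (v u : V) (f₁ f₂ : E)
    (hne : f₁ ≠ f₂) (huv : u ≠ v)
    (hf₁ : (G.fst f₁ = v ∧ G.snd f₁ = u) ∨ (G.fst f₁ = u ∧ G.snd f₁ = v))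
    (hf₂ : G.fst f₂ = v ∨ G.snd f₂ = v)
    (hf₂noloop : G.fst f₂ ≠ G.snd f₂)
    (hdeg2 : ∀ e, (G.fst e = v ∨ G.snd e = v) → e = f₁ ∨ e = f₂)
    (h : (Multigraph.mk (V := V) (E := {e : E // e ≠ f₁})
        (fun e => if G.fst e.1 = v then u else G.fst e.1)
        (fun e => if G.snd e.1 = v then u else G.snd e.1)).Mod3Orientable) :
    G.Mod3Orientable := by
  classical
  obtain ⟨o', ho'⟩ := h
  set G' : Multigraph V {e : E // e ≠ f₁} := Multigraph.mk
      (fun e => if G.fst e.1 = v then u else G.fst e.1)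
      (fun e => if G.snd e.1 = v then u else G.snd e.1) with hG'def
  have hf₂f₁ : f₂ ≠ f₁ := fun hh => hne hh.symm
  set b₂ : Bool := o' ⟨f₂, hf₂f₁⟩ with hb₂
  set b : Bool := if ((G.fst f₂ = v) ↔ (G.fst f₁ = v)) then !b₂ else b₂ with hb
  set o : E → Bool := fun e => if he : e = f₁ then b else o' ⟨e, he⟩ with ho
  refine ⟨o, fun w => ?_⟩
  set g : E → ℤ := fun e => if he : e = f₁ then 0 else G'.chi o' w ⟨e, he⟩ with hg
  have hof₁ : o f₁ = b := by simp [ho]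
  have hof₂ : o f₂ = b₂ := by simp [ho, hf₂f₁, hb₂]
  -- split the two excess sums
  have hmem₁ : f₁ ∈ (Finset.univ : Finset E) := Finset.mem_univ _
  have hmem₂ : f₂ ∈ (Finset.univ : Finset E).erase f₁ :=
    Finset.mem_erase.2 ⟨hf₂f₁, Finset.mem_univ _⟩
  have hsplitG : G.exc o w = G.chi o w f₁ + (G.chi o w f₂ +
      ∑ e ∈ ((Finset.univ : Finset E).erase f₁).erase f₂, G.chi o w e) := by
    rw [G.exc_eq_sum o w, ← Finset.add_sum_erase _ _ hmem₁,
      ← Finset.add_sum_erase _ _ hmem₂]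
  have hsub : (∑ e : {e : E // e ≠ f₁}, G'.chi o' w e)
      = ∑ e ∈ (Finset.univ : Finset E).erase f₁, g e := by
    rw [Finset.sum_subtype ((Finset.univ : Finset E).erase f₁)
      (p := fun e => e ≠ f₁) (by simp) g]
    refine Finset.sum_congr rfl fun e _ => ?_
    simp [hg, e.2]
  have hsplitG' : G'.exc o' w = g f₂ +
      ∑ e ∈ ((Finset.univ : Finset E).erase f₁).erase f₂, g e := by
    rw [G'.exc_eq_sum o' w, hsub, ← Finset.add_sum_erase _ _ hmem₂]
  have hrest : ∀ e ∈ ((Finset.univ : Finset E).erase f₁).erase f₂,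
      G.chi o w e = g e := by
    intro e he
    have he₂ : e ≠ f₂ := (Finset.mem_erase.1 he).1
    have he₁ : e ≠ f₁ := (Finset.mem_erase.1 (Finset.mem_erase.1 he).2).1
    have h1 : G.fst e ≠ v := fun hh => by
      rcases hdeg2 e (Or.inl hh) with h' | h'
      · exact he₁ h'
      · exact he₂ h'
    have h2 : G.snd e ≠ v := fun hh => by
      rcases hdeg2 e (Or.inr hh) with h' | h'
      · exact he₁ h'
      · exact he₂ h'
    simp [hg, he₁, Multigraph.chi, Multigraph.tail, Multigraph.head, ho,
      hG'def, h1, h2]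
  have hΔ : G.chi o w f₁ + G.chi o w f₂ - g f₂ = 0 := by
    have hgf₂ : g f₂ = G'.chi o' w ⟨f₂, hf₂f₁⟩ := by simp [hg, hf₂f₁]
    rw [hgf₂]
    simp only [Multigraph.chi, Multigraph.tail, Multigraph.head, hof₁, hof₂,
      hG'def, hb₂]
    rcases hf₁ with ⟨ha1, ha2⟩ | ⟨ha1, ha2⟩ <;> rcases hf₂ with hc | hc <;>
      [ (have hc' : G.snd f₂ ≠ v := fun hh => hf₂noloop (hc.trans hh.symm));
        (have hc' : G.fst f₂ ≠ v := fun hh => hf₂noloop (hh.trans hc.symm));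
        (have hc' : G.snd f₂ ≠ v := fun hh => hf₂noloop (hc.trans hh.symm));
        (have hc' : G.fst f₂ ≠ v := fun hh => hf₂noloop (hh.trans hc.symm))] <;>
      simp only [hb, ha1, ha2, hc, hb₂] <;>
      cases hb₂' : o' ⟨f₂, hf₂f₁⟩ <;>
      simp_all
  have hkey : G.exc o w = G'.exc o' w := by
    have hS : ∑ e ∈ ((Finset.univ : Finset E).erase f₁).erase f₂, G.chi o w e
        = ∑ e ∈ ((Finset.univ : Finset E).erase f₁).erase f₂, g e :=
      Finset.sum_congr rfl hrest
    rw [hsplitG, hsplitG', hS]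
    omega
  rw [hkey]
  exact ho' w
end
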